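/- Let t₁, t₂, t₃ ∈ ℝ² be non-collinear tower positions with calibrated source intensities s_c⁽ⁱ⁾ > 0, and fix an actual receiver position ω ∈ ℝ². Then the spoofing map ι ↦ (s⁽¹⁾, s⁽²⁾, s⁽³⁾) defined by s⁽ⁱ⁾ = s_c⁽ⁱ⁾·(1 + ‖tᵢ − ω‖²)/(1 + ‖tᵢ − ι‖²) is injective on ℝ²; i.e., distinct target position estimates require distinct triples of spoofed source intensities. -/

import Mathlib

/-!
Each spoofed intensity `s_c i (1 + ‖t i - ω‖²) / (1 + ‖t i - ι‖²)` determines the distance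
`‖t i - ι‖`. Two targets with the same spoofed intensities are therefore equidistant from every
tower, i.e. every tower lies on their perpendicular bisector. Non-collinear towers span the plane,
so that bisector is the whole plane, which forces the two targets to coincide.
-/

open EuclideanGeometry AffineSubspace

theorem eq_of_div_one_add_sq_eq {c a b : ℝ} (hc : c ≠ 0) (ha : 0 ≤ a) (hb : 0 ≤ b)
    (h : c / (1 + a ^ 2) = c / (1 + b ^ 2)) : a = b := by
  have hinv : (1 + a ^ 2)⁻¹ = (1 + b ^ 2)⁻¹ :=
    mul_left_cancel₀ hc (by simpa only [div_eq_mul_inv] using h)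
  rwa [inv_inj, add_right_inj, sq_eq_sq₀ ha hb] at hinv

theorem eq_of_forall_dist_eq_of_affineSpan_eq_top {V P ι : Type*} [NormedAddCommGroup V]
    [InnerProductSpace ℝ V] [MetricSpace P] [NormedAddTorsor V P] {p : ι → P}
    (hp : affineSpan ℝ (Set.range p) = ⊤) {x y : P} (h : ∀ i, dist (p i) x = dist (p i) y) :
    x = y := by
  rw [← perpBisector_eq_top, eq_top_iff, ← hp, affineSpan_le]
  rintro _ ⟨i, rfl⟩
  exact mem_perpBisector_iff_dist_eq.mpr (h i)

/-- For non-collinear towers `t i` with calibrated intensities `s_c i > 0`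
and a fixed actual receiver position `ω`, the spoofing map
`ι ↦ (s_c i * (1 + ‖t i - ω‖²) / (1 + ‖t i - ι‖²))ᵢ` is injective:
distinct target estimates require distinct triples of spoofed source intensities. -/
theorem spoofing_map_injective
    (t : Fin 3 → EuclideanSpace ℝ (Fin 2)) (ht : AffineIndependent ℝ t)
    (s_c : Fin 3 → ℝ) (hs : ∀ i, 0 < s_c i)
    (ω : EuclideanSpace ℝ (Fin 2)) :
    Function.Injective
      (fun ι : EuclideanSpace ℝ (Fin 2) =>
        fun i : Fin 3 => s_c i * (1 + ‖t i - ω‖ ^ 2) / (1 + ‖t i - ι‖ ^ 2)) := by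
  intro x y hxy
  have hspan : affineSpan ℝ (Set.range t) = ⊤ := by
    rw [ht.affineSpan_eq_top_iff_card_eq_finrank_add_one]
    simp
  refine eq_of_forall_dist_eq_of_affineSpan_eq_top hspan fun i => ?_
  rw [dist_eq_norm, dist_eq_norm]
  exact eq_of_div_one_add_sq_eq (mul_pos (hs i) (by positivity)).ne' (norm_nonneg _)
    (norm_nonneg _) (congrFun hxy i)
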